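/- arXiv:1601.07975 — 2 statements merged into one kernel-verified Lean document; each statement's English description precedes it below -/
import Mathlib

section
/- Let N be a (k,j)-perfect necklace over an alphabet of size b, and let n be a positive integer such that d_{b,n} | j and j | n, where d_{b,n} = ∏ p_i^{α_i} with p_i the primes dividing b and α_i the exponent of p_i in n. Then the cyclic word of length n·b^k obtained by concatenating n/j copies of N is (k,n)-perfect. -/
/-- `w` (a word of length `k`) occurs at position `i` in the cyclic word given by
the first `L` symbols of `s`. -/
def OccursAt {A : Type*} {k : ℕ} (s : ℕ → A) (L : ℕ) (w : Fin k → A) (i : ℕ) : Prop :=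
  ∀ j : Fin k, s ((i + (j : ℕ)) % L) = w j

/-- The cyclic word given by the first `n * |A| ^ k` values of `s` is a
`(k,n)`-perfect necklace: every word of length `k` occurs exactly `n` times, and
the occurrence positions are pairwise distinct modulo `n`. -/
def IsPerfectNecklace {A : Type*} [Fintype A] (k n : ℕ) (s : ℕ → A) : Prop :=
  ∀ w : Fin k → A,
    Nat.card {i : ℕ // i < n * Fintype.card A ^ k ∧
      OccursAt s (n * Fintype.card A ^ k) w i} = n ∧
    ∀ i i' : ℕ, i < n * Fintype.card A ^ k → i' < n * Fintype.card A ^ k →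
      OccursAt s (n * Fintype.card A ^ k) w i →
      OccursAt s (n * Fintype.card A ^ k) w i' →
      i % n = i' % n → i = i'

/-- `d_{b,n} = ∏ pᵢ^{αᵢ}` where the `pᵢ` are the primes dividing `b` and `αᵢ` is
the exponent of `pᵢ` in the factorization of `n`. -/
def dFactor (b n : ℕ) : ℕ := ∏ p ∈ b.primeFactors, p ^ n.factorization p

/-!
Write `L = j·bᵏ` for the length of `N` and `m = n / j` for the number of copies. An occurrence
of `w` at position `i < m·L` of the repetition is the same as an occurrence of `w` at `i % L`
in `N`, so `w` occurs `m·j = n` times. If two occurrences `i, i'` agree modulo `n`, they agree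
modulo `j`, hence (by perfectness of `N`) modulo `L`, hence modulo `lcm(L, n) = j·lcm(bᵏ, m)`.
The hypothesis `d_{b,n} ∣ j` says exactly that `m` is coprime to `b`, so this lcm is `n·bᵏ`,
the length of the repetition, and `i = i'`.
-/

def OccurrencesDistinctMod {A : Type*} {k : ℕ} (s : ℕ → A) (L n : ℕ) (w : Fin k → A) :
    Prop :=
  ∀ i i' : ℕ, i < L → i' < L → OccursAt s L w i → OccursAt s L w i' →
    i % n = i' % n → i = i'

theorem Nat.count_mul_of_periodic {p : ℕ → Prop} [DecidablePred p] {L : ℕ}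
    (hp : Function.Periodic p L) (m : ℕ) : Nat.count p (m * L) = m * Nat.count p L := by
  induction m with
  | zero => simp
  | succ m ih =>
    have hshift (i : ℕ) : p (m * L + i) ↔ p i := by
      rw [add_comm]
      exact Iff.of_eq (hp.nat_mul m i)
    rw [Nat.succ_mul, Nat.count_add, ih, Nat.succ_mul]
    simp only [Nat.count_eq_card_filter_range, hshift]

open scoped Count in
theorem card_lt_mul_and_mod (p : ℕ → Prop) (m L : ℕ) :
    Nat.card {i : ℕ // i < m * L ∧ p (i % L)} = m * Nat.card {i : ℕ // i < L ∧ p i} := by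
  classical
  have hper : Function.Periodic (fun i => p (i % L)) L := fun i =>
    congrArg p (Nat.add_mod_right i L)
  have hbase : Nat.count (fun i => p (i % L)) L = Nat.count p L := by
    simp only [Nat.count_eq_card_filter_range]
    exact congrArg Finset.card <| Finset.filter_congr fun i hi => by
      rw [Nat.mod_eq_of_lt (Finset.mem_range.mp hi)]
  rw [Nat.card_eq_fintype_card, ← Nat.count_eq_card_fintype, Nat.card_eq_fintype_card,
    ← Nat.count_eq_card_fintype, Nat.count_mul_of_periodic hper, hbase]

section Repetition

variable {A : Type*} (N : ℕ → A) {k : ℕ} (w : Fin k → A)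

theorem occursAt_mod_iff {L L' : ℕ} (hL : L ∣ L') (i : ℕ) :
    OccursAt (fun i => N (i % L)) L' w i ↔ OccursAt N L w (i % L) := by
  simp only [OccursAt, Nat.mod_mod_of_dvd _ hL, Nat.mod_add_mod]

theorem card_occursAt_repeat (m L : ℕ) :
    Nat.card {i : ℕ // i < m * L ∧ OccursAt (fun i => N (i % L)) (m * L) w i} =
      m * Nat.card {i : ℕ // i < L ∧ OccursAt N L w i} := by
  simp only [occursAt_mod_iff N w (dvd_mul_left L m)]
  exact card_lt_mul_and_mod _ m L

theorem modEq_mul_of_modEq_of_modEq {i i' j n B : ℕ} (hjn : j ∣ n) (hcop : (n / j).Coprime B)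
    (hL : i ≡ i' [MOD j * B]) (hn : i ≡ i' [MOD n]) : i ≡ i' [MOD n * B] := by
  have hlcm : Nat.lcm (j * B) n = n * B := by
    conv_lhs => rw [← Nat.mul_div_cancel' hjn]
    rw [Nat.lcm_mul_left, hcop.symm.lcm_eq_mul, ← mul_assoc, mul_right_comm,
      Nat.mul_div_cancel' hjn]
  exact hlcm ▸ Nat.mod_lcm hL hn

theorem occurrencesDistinctMod_repeat {j n B : ℕ} (hjB : 0 < j * B) (hjn : j ∣ n)
    (hcop : (n / j).Coprime B) (hN : OccurrencesDistinctMod N (j * B) j w) :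
    OccurrencesDistinctMod (fun i => N (i % (j * B))) (n * B) n w := by
  intro i i' hi hi' ho ho' hmod
  have hdvd : j * B ∣ n * B := mul_dvd_mul_right hjn B
  have hmodj : i % (j * B) % j = i' % (j * B) % j := by
    rw [Nat.mod_mod_of_dvd _ (dvd_mul_right j B), Nat.mod_mod_of_dvd _ (dvd_mul_right j B),
      ← Nat.mod_mod_of_dvd i hjn, hmod, Nat.mod_mod_of_dvd _ hjn]
  have hmodL : i ≡ i' [MOD j * B] :=
    hN _ _ (Nat.mod_lt _ hjB) (Nat.mod_lt _ hjB) ((occursAt_mod_iff N w hdvd i).mp ho)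
      ((occursAt_mod_iff N w hdvd i').mp ho') hmodj
  exact (modEq_mul_of_modEq_of_modEq hjn hcop hmodL hmod).eq_of_lt_of_lt hi hi'

end Repetition

theorem coprime_div_of_dFactor_dvd {b j n : ℕ} (hb : b ≠ 0) (hn : n ≠ 0)
    (hd : dFactor b n ∣ j) (hjn : j ∣ n) : (n / j).Coprime b := by
  refine Nat.coprime_of_dvd fun p hp hpm hpb => ?_
  have hpj : p ^ n.factorization p ∣ j :=
    (Finset.dvd_prod_of_mem _ (Nat.mem_primeFactors.mpr ⟨hp, hpb, hb⟩)).trans hd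
  have hpn : p ^ (n.factorization p + 1) ∣ n :=
    calc p ^ (n.factorization p + 1) = p ^ n.factorization p * p := pow_succ _ _
      _ ∣ j * (n / j) := mul_dvd_mul hpj hpm
      _ = n := Nat.mul_div_cancel' hjn
  exact Nat.pow_succ_factorization_not_dvd hn hp hpn

theorem isPerfectNecklace_zero {A : Type*} [Fintype A] (k : ℕ) (s : ℕ → A) :
    IsPerfectNecklace k 0 s := fun _ =>
  ⟨by simp, fun _ _ hi => absurd hi (by simp)⟩

theorem repeat_perfect_general {A : Type*} [Fintype A] (b k j n : ℕ)
    (hb : Fintype.card A = b) (hb2 : 2 ≤ b)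
    (hd : dFactor b n ∣ j) (hjn : j ∣ n)
    (N : ℕ → A) (hN : IsPerfectNecklace k j N) :
    IsPerfectNecklace k n (fun i => N (i % (j * b ^ k))) := by
  subst hb
  rcases Nat.eq_zero_or_pos n with rfl | hn
  · exact isPerfectNecklace_zero k _
  set B := Fintype.card A ^ k
  have hjB : 0 < j * B := Nat.mul_pos (Nat.pos_of_dvd_of_pos hjn hn) (pow_pos (by omega) k)
  have hcop : (n / j).Coprime B :=
    (coprime_div_of_dFactor_dvd (by omega) hn.ne' hd hjn).pow_right k
  intro w
  obtain ⟨hcount, hdistinct⟩ := hN w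
  refine ⟨?_, occurrencesDistinctMod_repeat N w hjB hjn hcop hdistinct⟩
  rw [show n * B = n / j * (j * B) by rw [← mul_assoc, Nat.div_mul_cancel hjn],
    card_occursAt_repeat, hcount, Nat.div_mul_cancel hjn]

/-- If `N` is a `(k,j)`-perfect necklace and `d_{b,n} ∣ j ∣ n`, then the cyclic word
of length `n·b^k` obtained by repeating `N` exactly `n/j` times is `(k,n)`-perfect. -/
theorem repeat_perfect {A : Type*} [Fintype A] (b k j n : ℕ)
    (hb : Fintype.card A = b) (hb2 : 2 ≤ b) (hk : 0 < k) (hjpos : 0 < j)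
    (hd : dFactor b n ∣ j) (hjn : j ∣ n)
    (N : ℕ → A) (hN : IsPerfectNecklace k j N) :
    IsPerfectNecklace k n (fun i => N (i % (j * b ^ k))) :=
  repeat_perfect_general b k j n hb hb2 hd hjn N hN
end

section
/- Let b ≥ 2 and let x = (x_0, x_1, …) be a periodic sequence over alphabet A (|A| = b) whose period is m·b^k and whose fundamental period is a (k,m)-perfect necklace. Then for every test function t : A^k → ℝ, the sequence T_n = |(1/n) Σ_{i=0}^{n−1} t(x_i,…,x_{i+k−1}) − τ| converges to 0 as n → ∞, where τ = b^{−k} Σ_{w ∈ A^k} t(w). Moreover, for every integer h > k + log_b m there exists a word w of length h not occurring in x, so the indicator test of size h given by t̃ = 1_{w} has limsup T̃_n = τ̃ = b^{−h} > 0, i.e., x fails some test of size h. -/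
open Finset Filter Function Topology

section PeriodicAverage

variable {f : ℕ → ℝ} {L : ℕ}

lemma Function.Periodic.sum_range_eq_sum_range_mod (hf : Periodic f L)
    (h0 : ∑ i ∈ range L, f i = 0) (n : ℕ) :
    ∑ i ∈ range n, f i = ∑ i ∈ range (n % L), f i := by
  have sum_range_mul_add : ∀ q r, ∑ i ∈ range (L * q + r), f i = ∑ i ∈ range r, f i := by
    intro q
    induction q with
    | zero => simp
    | succ q ih =>
      intro r
      rw [Nat.mul_succ, add_comm (L * q) L, add_assoc, sum_range_add, h0, zero_add]
      simp only [add_comm L, hf _, ih]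
  conv_lhs => rw [← Nat.div_add_mod n L]
  exact sum_range_mul_add _ _

lemma Function.Periodic.abs_sum_range_le (hf : Periodic f L) (hL : 0 < L)
    (h0 : ∑ i ∈ range L, f i = 0) (n : ℕ) :
    |∑ i ∈ range n, f i| ≤ ∑ i ∈ range L, |f i| := by
  rw [hf.sum_range_eq_sum_range_mod h0]
  exact (abs_sum_le_sum_abs _ _).trans <| sum_le_sum_of_subset_of_nonneg
    (range_subset_range.mpr (Nat.mod_lt n hL).le) fun i _ _ => abs_nonneg _

lemma Function.Periodic.tendsto_abs_average_sub (hf : Periodic f L) (hL : 0 < L) :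
    Tendsto (fun n : ℕ => |(1 / (n : ℝ)) * ∑ i ∈ range n, f i - (∑ i ∈ range L, f i) / L|)
      atTop (𝓝 0) := by
  set τ := (∑ i ∈ range L, f i) / L
  have hL' : (L : ℝ) ≠ 0 := by positivity
  have hg : Periodic (fun i => f i - τ) L := fun i => by simp only [hf i]
  have hg0 : ∑ i ∈ range L, (f i - τ) = 0 := by
    rw [sum_sub_distrib, sum_const, card_range, nsmul_eq_mul, mul_div_cancel₀ _ hL', sub_self]
  set C := ∑ i ∈ range L, |f i - τ|
  have hbound : ∀ n : ℕ, 1 ≤ n →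
      |(1 / (n : ℝ)) * ∑ i ∈ range n, f i - τ| ≤ C / n := by
    intro n hn
    have hn' : (0 : ℝ) < n := by exact_mod_cast hn
    have hcentre : (1 / (n : ℝ)) * ∑ i ∈ range n, f i - τ
        = (1 / (n : ℝ)) * ∑ i ∈ range n, (f i - τ) := by
      rw [sum_sub_distrib, sum_const, card_range, nsmul_eq_mul]
      field_simp
    rw [hcentre, abs_mul, abs_of_pos (by positivity), one_div_mul_eq_div]
    exact div_le_div_of_nonneg_right (hg.abs_sum_range_le hL hg0 n) hn'.le
  exact squeeze_zero' (Eventually.of_forall fun n => abs_nonneg _)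
    (eventually_atTop.mpr ⟨1, hbound⟩) (tendsto_const_div_atTop_nhds_zero_nat C)

end PeriodicAverage

def window {A : Type*} (x : ℕ → A) (k i : ℕ) : Fin k → A := fun j => x (i + j)

section Necklace

variable {A : Type*} {x : ℕ → A} {L : ℕ}

lemma Function.Periodic.periodic_window (hx : Periodic x L) (k : ℕ) : Periodic (window x k) L :=
  fun i => funext fun j => by simp only [window, add_right_comm i L, hx _]

lemma Function.Periodic.occursAt_iff (hx : Periodic x L) {k : ℕ} (w : Fin k → A) (i : ℕ) :
    OccursAt x L w i ↔ window x k i = w := by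
  simp only [OccursAt, window, funext_iff, hx.map_mod_nat]

variable [Fintype A] [DecidableEq A] {k m : ℕ}

lemma IsPerfectNecklace.card_filter_window_eq (hperf : IsPerfectNecklace k m x)
    (hx : Periodic x (m * Fintype.card A ^ k)) (w : Fin k → A) :
    #{i ∈ range (m * Fintype.card A ^ k) | window x k i = w} = m := by
  refine (Nat.card_eq_finsetCard _).symm.trans <| (Nat.card_congr ?_).trans (hperf w).1
  exact Equiv.subtypeEquivRight fun i => by simp only [mem_filter, mem_range, hx.occursAt_iff]

lemma IsPerfectNecklace.sum_range_window (hperf : IsPerfectNecklace k m x)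
    (hx : Periodic x (m * Fintype.card A ^ k)) (t : (Fin k → A) → ℝ) :
    ∑ i ∈ range (m * Fintype.card A ^ k), t (window x k i) = m * ∑ w, t w := by
  rw [← sum_fiberwise (range _) (window x k), mul_sum]
  refine sum_congr rfl fun w _ => ?_
  rw [sum_congr rfl fun i hi => congrArg t (mem_filter.mp hi).2, sum_const, nsmul_eq_mul,
    hperf.card_filter_window_eq hx]

end Necklace

lemma Function.Periodic.exists_forall_window_ne {A : Type*} [Fintype A] {x : ℕ → A} {L h : ℕ}
    (hx : Periodic x L) (hL : 0 < L) (hlt : L < Fintype.card A ^ h) :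
    ∃ w : Fin h → A, ∀ i, window x h i ≠ w := by
  have hns : ¬ Surjective fun i : Fin L => window x h i := fun hs => by
    have := Fintype.card_le_of_surjective _ hs
    simp only [Fintype.card_fun, Fintype.card_fin] at this
    omega
  simp only [Surjective, not_forall] at hns
  obtain ⟨w, hw⟩ := hns
  refine ⟨w, fun i hi => hw ⟨⟨i % L, Nat.mod_lt i hL⟩, ?_⟩⟩
  rw [← hi]
  exact (hx.periodic_window h).map_mod_nat i

lemma mul_pow_lt_pow_of_add_logb_lt {b k m h : ℕ} (hb : 1 < b) (hm : 0 < m)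
    (hh : (k : ℝ) + Real.logb b m < h) : m * b ^ k < b ^ h := by
  have hb' : (1 : ℝ) < b := by exact_mod_cast hb
  have hlog : Real.logb b (m * b ^ k) = Real.logb b m + k := by
    rw [Real.logb_mul (by positivity) (by positivity), Real.logb_pow,
      Real.logb_self_eq_one hb', mul_one]
  have : ((m * b ^ k : ℕ) : ℝ) < (b : ℝ) ^ (h : ℝ) := by
    rw [← Real.logb_lt_iff_lt_rpow hb' (by positivity)]
    push_cast
    linarith
  exact_mod_cast (Real.rpow_natCast (b : ℝ) h) ▸ this

theorem perfect_passes_small_tests_fails_large_general {A : Type*} [Fintype A] [DecidableEq A]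
    (b k m : ℕ) (hb : Fintype.card A = b) (hb2 : 2 ≤ b) (hm : 0 < m)
    (x : ℕ → A) (hper : ∀ i : ℕ, x (i + m * b ^ k) = x i)
    (hperf : IsPerfectNecklace k m x) :
    (∀ t : (Fin k → A) → ℝ,
      Filter.Tendsto
        (fun n : ℕ =>
          |(1 / (n : ℝ)) * ∑ i ∈ Finset.range n, t (fun j => x (i + (j : ℕ))) -
            (∑ w : Fin k → A, t w) / (b : ℝ) ^ k|)
        Filter.atTop (nhds 0)) ∧
    (∀ h : ℕ, (k : ℝ) + Real.logb b m < h →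
      ∃ w : Fin h → A,
        (∀ i : ℕ, ¬ ∀ j : Fin h, x (i + (j : ℕ)) = w j) ∧
        Filter.Tendsto
          (fun n : ℕ =>
            |(1 / (n : ℝ)) * ∑ i ∈ Finset.range n,
                (if ∀ j : Fin h, x (i + (j : ℕ)) = w j then (1 : ℝ) else 0) -
              1 / (b : ℝ) ^ h|)
          Filter.atTop (nhds (1 / (b : ℝ) ^ h)) ∧
        0 < 1 / (b : ℝ) ^ h) := by
  subst hb
  have hx : Periodic x (m * Fintype.card A ^ k) := hper
  have hL : 0 < m * Fintype.card A ^ k := by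
    have : 0 < Fintype.card A := by omega
    positivity
  refine ⟨fun t => ?_, fun h hh => ?_⟩
  · have hmean : (∑ i ∈ range (m * Fintype.card A ^ k), t (window x k i)) /
        ((m * Fintype.card A ^ k : ℕ) : ℝ) = (∑ w, t w) / (Fintype.card A : ℝ) ^ k := by
      rw [hperf.sum_range_window hx, Nat.cast_mul, Nat.cast_pow,
        mul_div_mul_left _ _ (by positivity)]
    have hcesaro := ((hx.periodic_window k).comp t).tendsto_abs_average_sub hL
    rw [comp_def, hmean] at hcesaro
    exact hcesaro
  · obtain ⟨w, hw⟩ := hx.exists_forall_window_ne hL (mul_pow_lt_pow_of_add_logb_lt hb2 hm hh)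
    have hnot : ∀ i, ¬ ∀ j : Fin h, x (i + j) = w j := fun i hi => hw i (funext hi)
    refine ⟨w, hnot, ?_, by positivity⟩
    simp only [hnot, if_false, sum_const_zero, mul_zero, zero_sub, abs_neg]
    rw [abs_of_pos (by positivity)]
    exact tendsto_const_nhds

/-- A periodic sequence whose fundamental cycle is a `(k,m)`-perfect necklace passes
every statistical test of size `k`: the empirical mean of any test function `t` on
sliding windows of length `k` converges to its expected value `τ = b^{−k} Σ_w t(w)`.
But for every `h > k + log_b m` there is a word `w` of length `h` not occurring in the
sequence, and the indicator test of `w` (of size `h`) rejects it: its statistic `T̃_n`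
converges to `τ̃ = b^{−h} > 0` instead of to `0`. -/
theorem perfect_passes_small_tests_fails_large {A : Type*} [Fintype A] [DecidableEq A]
    (b k m : ℕ) (hb : Fintype.card A = b) (hb2 : 2 ≤ b) (hk : 0 < k) (hm : 0 < m)
    (x : ℕ → A) (hper : ∀ i : ℕ, x (i + m * b ^ k) = x i)
    (hperf : IsPerfectNecklace k m x) :
    (∀ t : (Fin k → A) → ℝ,
      Filter.Tendsto
        (fun n : ℕ =>
          |(1 / (n : ℝ)) * ∑ i ∈ Finset.range n, t (fun j => x (i + (j : ℕ))) -
            (∑ w : Fin k → A, t w) / (b : ℝ) ^ k|)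
        Filter.atTop (nhds 0)) ∧
    (∀ h : ℕ, (k : ℝ) + Real.logb b m < h →
      ∃ w : Fin h → A,
        (∀ i : ℕ, ¬ ∀ j : Fin h, x (i + (j : ℕ)) = w j) ∧
        Filter.Tendsto
          (fun n : ℕ =>
            |(1 / (n : ℝ)) * ∑ i ∈ Finset.range n,
                (if ∀ j : Fin h, x (i + (j : ℕ)) = w j then (1 : ℝ) else 0) -
              1 / (b : ℝ) ^ h|)
          Filter.atTop (nhds (1 / (b : ℝ) ^ h)) ∧
        0 < 1 / (b : ℝ) ^ h) :=
  perfect_passes_small_tests_fails_large_general b k m hb hb2 hm x hper hperf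
end
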